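/- Let A ⊆ 𝕋 be an arc, let T_1, …, T_n be finite Blaschke products, and set F = T_n ∘ ⋯ ∘ T_1 (restricted to 𝕋). If m(F(A)) < 1, then m(F(A)) ≥ m(A)·∏_{k=1}^n inf_{z∈𝕋}|T_k'(z)|. -/

import Mathlib

open MeasureTheory Filter Set

noncomputable section

/-- The unit circle 𝕋 = {z ∈ ℂ : |z| = 1}. -/
def unitCircle : Set ℂ := {z : ℂ | ‖z‖ = 1}

/-- The open unit disc D = {z ∈ ℂ : |z| < 1}. -/
def unitDisc : Set ℂ := {z : ℂ | ‖z‖ < 1}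

/-- Normalized arc-length (Haar probability) measure on the unit circle, realised as a
measure on ℂ: the pushforward of Lebesgue measure on [0,1) under t ↦ e^{2πit}. -/
def mCircle : Measure ℂ :=
  Measure.map (fun t : ℝ => Complex.exp (2 * (Real.pi : ℂ) * Complex.I * (t : ℂ)))
    (volume.restrict (Set.Ico (0 : ℝ) 1))

/-- The Poisson kernel P_x(z) = (1 − |x|²)/|z − x|². -/
def poissonK (x z : ℂ) : ℝ := (1 - ‖x‖ ^ 2) / ‖z - x‖ ^ 2

/-- `T` is a finite Blaschke product of degree `n ≥ 1`. -/
def IsBlaschke (n : ℕ) (T : ℂ → ℂ) : Prop :=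
  1 ≤ n ∧ ∃ (θ₀ : ℂ) (a : Fin n → ℂ), ‖θ₀‖ = 1 ∧ (∀ i, ‖a i‖ < 1) ∧
    ∀ z : ℂ, T z = θ₀ * ∏ i, (z - a i) / (1 - (starRingEnd ℂ) (a i) * z)

/-- inf_{z ∈ 𝕋} |T'(z)|. -/
def derivInf (T : ℂ → ℂ) : ℝ := ⨅ z : unitCircle, ‖deriv T (z : ℂ)‖

/-- The backward cocycle iterate T_{σ^{-n}ω}^{(n)} = T_{σ^{-1}ω} ∘ ⋯ ∘ T_{σ^{-n}ω}. -/
def backIter {Ω : Type*} (σinv : Ω → Ω) (T : Ω → ℂ → ℂ) : ℕ → Ω → ℂ → ℂ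
  | 0, _, z => z
  | n + 1, ω, z => backIter σinv T n ω (T (σinv^[n + 1] ω) z)

/-- Composition G_{n-1} ∘ ⋯ ∘ G_0 of a finite family of self-maps of ℂ. -/
def compFam (n : ℕ) (G : Fin n → ℂ → ℂ) (z : ℂ) : ℂ :=
  (List.ofFn G).foldl (fun w g => g w) z

/-!
On `𝕋` a finite Blaschke product with zeros `aᵢ` satisfies `z T'(z) = (∑ᵢ P_{aᵢ}(z)) T(z)` with
Poisson kernels `P_{aᵢ}(z) > 0`, so `T` runs counterclockwise along `𝕋` with speed `|T'(z)|`.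
This property survives products and compositions, and under composition the lower bounds for
`|T'|` multiply. Such a map `F` lifts through `t ↦ e^{2πit}` to a real function `f` with
`f' = |F'(e^{2πit})| ≥ inf |F'|`, so `F` maps the arc `e([a, b))` onto an arc containing
`e([f a, f b))`, of parameter length at least `(b - a) · inf |F'|`. An arc of parameter length
`ℓ` has measure `min ℓ 1`; this is where `m(F(A)) < 1` enters.
-/

open Complex ComplexConjugate

@[simp] lemma mem_unitCircle {z : ℂ} : z ∈ unitCircle ↔ ‖z‖ = 1 := Iff.rfl

instance : Nonempty unitCircle := ⟨⟨1, by simp⟩⟩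

def circleParam (t : ℝ) : ℂ := exp (2 * (Real.pi : ℂ) * I * t)

lemma continuous_circleParam : Continuous circleParam := by
  unfold circleParam; fun_prop

lemma circleParam_mem_unitCircle (t : ℝ) : circleParam t ∈ unitCircle := by
  simp [circleParam, norm_exp]

lemma hasDerivAt_circleParam (t : ℝ) :
    HasDerivAt circleParam (2 * Real.pi * I * circleParam t) t := by
  have h := ((hasDerivAt_id (t : ℂ)).const_mul (2 * (Real.pi : ℂ) * I)).cexp.comp_ofReal
  rw [id, mul_one, mul_comm (cexp _)] at h
  exact h

lemma circleParam_add (s t : ℝ) : circleParam (s + t) = circleParam s * circleParam t := by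
  rw [circleParam, circleParam, circleParam, ← exp_add]; push_cast; ring_nf

lemma circleParam_eq_circleParam_iff {s t : ℝ} :
    circleParam s = circleParam t ↔ ∃ k : ℤ, s = t + k := by
  simp only [circleParam, exp_eq_exp_iff_exists_int]
  refine exists_congr fun k => ⟨fun h => ?_, fun h => by rw [h]; push_cast; ring⟩
  have hπ : 2 * (Real.pi : ℂ) * I ≠ 0 := by simp [Real.pi_ne_zero]
  have : (s : ℂ) = t + k := mul_left_cancel₀ hπ (h.trans (by ring))
  exact_mod_cast this

lemma injOn_circleParam (a : ℝ) : InjOn circleParam (Ico a (a + 1)) := by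
  intro s hs t ht hst
  obtain ⟨k, hk⟩ := circleParam_eq_circleParam_iff.mp hst
  have h1 : k < 1 := by exact_mod_cast (show (k : ℝ) < 1 by linarith [hs.2, ht.1])
  have h2 : -1 < k := by exact_mod_cast (show (-1 : ℝ) < k by linarith [hs.1, ht.2])
  obtain rfl : k = 0 := by omega
  simpa using hk

lemma exists_circleParam_eq {w : ℂ} (hw : w ∈ unitCircle) : ∃ t, circleParam t = w := by
  refine ⟨arg w / (2 * Real.pi), ?_⟩
  have hpolar := norm_mul_exp_arg_mul_I w
  rw [show ‖w‖ = 1 from hw, ofReal_one, one_mul] at hpolar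
  conv_rhs => rw [← hpolar]
  have hπ : (Real.pi : ℂ) ≠ 0 := by exact_mod_cast Real.pi_ne_zero
  rw [circleParam]; push_cast; field_simp

lemma circleParam_int_add (k : ℤ) (t : ℝ) : circleParam (k + t) = circleParam t :=
  circleParam_eq_circleParam_iff.mpr ⟨k, add_comm _ _⟩

lemma mCircle_eq_map : mCircle = Measure.map circleParam (volume.restrict (Ico 0 1)) := rfl

lemma mCircle_apply {S : Set ℂ} (hS : MeasurableSet S) (α : ℝ) :
    mCircle S = volume (circleParam ⁻¹' S ∩ Ico α (α + 1)) := by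
  set P := circleParam ⁻¹' S
  have hP : MeasurableSet P := continuous_circleParam.measurable hS
  have hinv : ∀ g : AddSubgroup.zmultiples (1 : ℝ), (fun x => g +ᵥ x) ⁻¹' P = P := by
    rintro ⟨_, k, rfl⟩
    ext x
    simp [P, vadd_eq_add, circleParam_int_add]
  calc mCircle S = volume (P ∩ Ico 0 (0 + 1)) := by
        rw [zero_add, mCircle_eq_map, Measure.map_apply continuous_circleParam.measurable hS,
          Measure.restrict_apply' measurableSet_Ico]
    _ = volume (P ∩ Ioc 0 (0 + 1)) := measure_congr (EventuallyEq.rfl.inter Ico_ae_eq_Ioc)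
    _ = volume (P ∩ Ioc α (α + 1)) :=
        (isAddFundamentalDomain_Ioc one_pos 0).measure_set_eq
          (isAddFundamentalDomain_Ioc one_pos α) hP hinv
    _ = volume (P ∩ Ico α (α + 1)) := measure_congr (EventuallyEq.rfl.inter Ico_ae_eq_Ioc.symm)

lemma mCircle_le_one (S : Set ℂ) : mCircle S ≤ 1 :=
  (measure_mono (subset_univ S)).trans_eq <| by
    rw [mCircle_apply MeasurableSet.univ 0, preimage_univ, univ_inter, Real.volume_Ico]; simp

lemma mCircle_image_Ico_of_le_add_one {a b : ℝ} (hb : b ≤ a + 1) :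
    mCircle (circleParam '' Ico a b) = ENNReal.ofReal (b - a) := by
  have hinj := injOn_circleParam a
  have hsub : Ico a b ⊆ Ico a (a + 1) := Ico_subset_Ico_right hb
  have hmeas : MeasurableSet (circleParam '' Ico a b) :=
    measurableSet_Ico.image_of_continuousOn_injOn continuous_circleParam.continuousOn
      (hinj.mono hsub)
  rw [mCircle_apply hmeas a, hinj.preimage_image_inter hsub, Real.volume_Ico]

lemma toReal_mCircle_image_Ico {a b : ℝ} (hab : a ≤ b) :
    (mCircle (circleParam '' Ico a b)).toReal = min (b - a) 1 := by
  rcases le_total b (a + 1) with hb | hb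
  · rw [mCircle_image_Ico_of_le_add_one hb, ENNReal.toReal_ofReal (by linarith),
      min_eq_left (by linarith)]
  · have hfull : mCircle (circleParam '' Ico a b) = 1 := by
      refine le_antisymm (mCircle_le_one _) ?_
      calc (1 : ENNReal) = mCircle (circleParam '' Ico a (a + 1)) := by
            rw [mCircle_image_Ico_of_le_add_one le_rfl]; simp
        _ ≤ _ := measure_mono (image_mono (Ico_subset_Ico_right hb))
    rw [hfull, min_eq_right (by linarith), ENNReal.toReal_one]

lemma norm_eq_of_mul_eq_ofReal_mul {z d w : ℂ} {r : ℝ} (hz : z ∈ unitCircle)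
    (hw : w ∈ unitCircle) (hr : 0 ≤ r) (h : z * d = r * w) : ‖d‖ = r := by
  have := congrArg norm h
  rwa [norm_mul, norm_mul, mem_unitCircle.mp hz, mem_unitCircle.mp hw, one_mul, mul_one,
    norm_real, Real.norm_of_nonneg hr] at this

/-- `F` maps `𝕋` to itself and runs counterclockwise along it: on `𝕋` the angular speed
`z F'(z) / F(z)` is a nonnegative real, hence equal to `‖F'(z)‖`. -/
structure IsOrientedCircleMap (F : ℂ → ℂ) : Prop where
  mapsTo : MapsTo F unitCircle unitCircle
  differentiableAt : ∀ z ∈ unitCircle, DifferentiableAt ℂ F z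
  continuousOn_deriv : ContinuousOn (deriv F) unitCircle
  mul_deriv : ∀ z ∈ unitCircle, z * deriv F z = ‖deriv F z‖ * F z

namespace IsOrientedCircleMap

variable {F G : ℂ → ℂ}

lemma continuousOn (hF : IsOrientedCircleMap F) : ContinuousOn F unitCircle :=
  fun z hz => (hF.differentiableAt z hz).continuousAt.continuousWithinAt

lemma id : IsOrientedCircleMap fun z => z where
  mapsTo := mapsTo_id _
  differentiableAt _ _ := differentiableAt_id
  continuousOn_deriv := by simp only [deriv_id'']; exact continuousOn_const
  mul_deriv _ _ := by simp [mul_comm]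

lemma const {c : ℂ} (hc : ‖c‖ = 1) : IsOrientedCircleMap fun _ => c where
  mapsTo _ _ := hc
  differentiableAt _ _ := differentiableAt_const c
  continuousOn_deriv := by simp only [deriv_const']; exact continuousOn_const
  mul_deriv _ _ := by simp

lemma mul (hF : IsOrientedCircleMap F) (hG : IsOrientedCircleMap G) :
    IsOrientedCircleMap fun z => F z * G z := by
  have hderiv : ∀ z ∈ unitCircle,
      deriv (fun z => F z * G z) z = deriv F z * G z + F z * deriv G z := fun z hz =>
    deriv_mul (hF.differentiableAt z hz) (hG.differentiableAt z hz)
  have hmul : ∀ z ∈ unitCircle, z * deriv (fun z => F z * G z) z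
      = ((‖deriv F z‖ + ‖deriv G z‖ : ℝ) : ℂ) * (F z * G z) := fun z hz => by
    rw [hderiv z hz]
    push_cast
    linear_combination G z * hF.mul_deriv z hz + F z * hG.mul_deriv z hz
  have hmaps : MapsTo (fun z => F z * G z) unitCircle unitCircle := fun z hz => by
    simp [mem_unitCircle.mp (hF.mapsTo hz), mem_unitCircle.mp (hG.mapsTo hz)]
  refine ⟨hmaps, fun z hz => (hF.differentiableAt z hz).mul (hG.differentiableAt z hz), ?_,
    fun z hz => ?_⟩
  · exact ((hF.continuousOn_deriv.mul hG.continuousOn).add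
      (hF.continuousOn.mul hG.continuousOn_deriv)).congr hderiv
  · rw [norm_eq_of_mul_eq_ofReal_mul hz (hmaps hz) (by positivity) (hmul z hz)]
    exact hmul z hz

lemma finset_prod {ι : Type*} (s : Finset ι) {B : ι → ℂ → ℂ}
    (hB : ∀ i ∈ s, IsOrientedCircleMap (B i)) : IsOrientedCircleMap fun z => ∏ i ∈ s, B i z := by
  classical
  induction s using Finset.induction_on with
  | empty => simpa using const norm_one
  | insert i s hi ih =>
    simp only [Finset.prod_insert hi]
    exact (hB i (s.mem_insert_self i)).mul (ih fun j hj => hB j (Finset.mem_insert_of_mem hj))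

lemma deriv_comp_eq (hG : IsOrientedCircleMap G) (hF : IsOrientedCircleMap F) {z : ℂ}
    (hz : z ∈ unitCircle) : deriv (fun z => G (F z)) z = deriv G (F z) * deriv F z :=
  deriv_comp z (hG.differentiableAt _ (hF.mapsTo hz)) (hF.differentiableAt z hz)

lemma comp (hG : IsOrientedCircleMap G) (hF : IsOrientedCircleMap F) :
    IsOrientedCircleMap fun z => G (F z) := by
  have hderiv : ∀ z ∈ unitCircle, deriv (fun z => G (F z)) z = deriv G (F z) * deriv F z :=
    fun _ hz => hG.deriv_comp_eq hF hz
  refine ⟨hG.mapsTo.comp hF.mapsTo,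
    fun z hz => (hG.differentiableAt _ (hF.mapsTo hz)).comp z (hF.differentiableAt z hz),
    ((hG.continuousOn_deriv.comp hF.continuousOn hF.mapsTo).mul hF.continuousOn_deriv).congr
      hderiv, fun z hz => ?_⟩
  rw [hderiv z hz, norm_mul, ofReal_mul]
  linear_combination deriv G (F z) * hF.mul_deriv z hz
    + (‖deriv F z‖ : ℂ) * hG.mul_deriv (F z) (hF.mapsTo hz)

end IsOrientedCircleMap

lemma derivInf_nonneg (F : ℂ → ℂ) : 0 ≤ derivInf F :=
  Real.iInf_nonneg fun _ => norm_nonneg _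

lemma derivInf_le_norm_deriv (F : ℂ → ℂ) {z : ℂ} (hz : z ∈ unitCircle) :
    derivInf F ≤ ‖deriv F z‖ :=
  ciInf_le ⟨0, by rintro _ ⟨w, rfl⟩; exact norm_nonneg _⟩ (⟨z, hz⟩ : unitCircle)

lemma one_le_derivInf_id : 1 ≤ derivInf fun z => z :=
  le_ciInf fun _ => by simp

lemma IsOrientedCircleMap.derivInf_mul_derivInf_le_derivInf_comp {F G : ℂ → ℂ}
    (hG : IsOrientedCircleMap G) (hF : IsOrientedCircleMap F) :
    derivInf G * derivInf F ≤ derivInf fun z => G (F z) := by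
  refine le_ciInf fun ⟨z, hz⟩ => ?_
  rw [hG.deriv_comp_eq hF hz, norm_mul]
  exact mul_le_mul (derivInf_le_norm_deriv G (hF.mapsTo hz)) (derivInf_le_norm_deriv F hz)
    (derivInf_nonneg F) (norm_nonneg _)

lemma isOrientedCircleMap_foldl :
    ∀ L : List (ℂ → ℂ), (∀ g ∈ L, IsOrientedCircleMap g) →
      IsOrientedCircleMap fun z => L.foldl (fun w g => g w) z
  | [], _ => IsOrientedCircleMap.id
  | g :: L, hL => (isOrientedCircleMap_foldl L fun h hh => hL h (List.mem_cons_of_mem g hh)).comp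
      (hL g List.mem_cons_self)

lemma prod_map_derivInf_le_derivInf_foldl :
    ∀ L : List (ℂ → ℂ), (∀ g ∈ L, IsOrientedCircleMap g) →
      (L.map derivInf).prod ≤ derivInf fun z => L.foldl (fun w g => g w) z
  | [], _ => one_le_derivInf_id
  | g :: L, hL => by
    have hL' : ∀ h ∈ L, IsOrientedCircleMap h := fun h hh => hL h (List.mem_cons_of_mem g hh)
    calc ((g :: L).map derivInf).prod
        = (L.map derivInf).prod * derivInf g := by rw [List.map_cons, List.prod_cons, mul_comm]
      _ ≤ (derivInf fun z => L.foldl (fun w g => g w) z) * derivInf g :=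
        mul_le_mul_of_nonneg_right (prod_map_derivInf_le_derivInf_foldl L hL') (derivInf_nonneg g)
      _ ≤ _ := (isOrientedCircleMap_foldl L hL').derivInf_mul_derivInf_le_derivInf_comp
        (hL g List.mem_cons_self)

lemma isOrientedCircleMap_compFam {n : ℕ} {T : Fin n → ℂ → ℂ}
    (hT : ∀ k, IsOrientedCircleMap (T k)) : IsOrientedCircleMap (compFam n T) :=
  isOrientedCircleMap_foldl _ (List.forall_mem_ofFn_iff.mpr hT)

lemma prod_derivInf_le_derivInf_compFam {n : ℕ} {T : Fin n → ℂ → ℂ}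
    (hT : ∀ k, IsOrientedCircleMap (T k)) : ∏ k, derivInf (T k) ≤ derivInf (compFam n T) := by
  have := prod_map_derivInf_le_derivInf_foldl _ (List.forall_mem_ofFn_iff.mpr hT)
  rwa [List.map_ofFn, List.prod_ofFn] at this

def blaschkeFactor (a z : ℂ) : ℂ := (z - a) / (1 - conj a * z)

section blaschkeFactor

variable {a z : ℂ}

lemma one_sub_conj_mul_eq (hz : z ∈ unitCircle) : 1 - conj a * z = z * conj (z - a) := by
  have hzz : z * conj z = 1 := by
    rw [mul_conj, normSq_eq_norm_sq, mem_unitCircle.mp hz]; norm_num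
  rw [map_sub]
  linear_combination -hzz

lemma sub_ne_zero_of_norm_lt_one (ha : ‖a‖ < 1) (hz : z ∈ unitCircle) : z - a ≠ 0 :=
  sub_ne_zero.mpr fun h => by simp [h, ha.ne] at hz

lemma one_sub_conj_mul_ne_zero (ha : ‖a‖ < 1) (hz : z ∈ unitCircle) : 1 - conj a * z ≠ 0 := by
  rw [one_sub_conj_mul_eq hz]
  exact mul_ne_zero (by rintro rfl; simp at hz)
    ((map_ne_zero _).mpr (sub_ne_zero_of_norm_lt_one ha hz))

lemma norm_blaschkeFactor (ha : ‖a‖ < 1) (hz : z ∈ unitCircle) : ‖blaschkeFactor a z‖ = 1 := by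
  rw [blaschkeFactor, one_sub_conj_mul_eq hz, norm_div, norm_mul, norm_conj, mem_unitCircle.mp hz,
    one_mul, div_self (norm_ne_zero_iff.mpr (sub_ne_zero_of_norm_lt_one ha hz))]

lemma hasDerivAt_blaschkeFactor (h : 1 - conj a * z ≠ 0) :
    HasDerivAt (blaschkeFactor a) ((1 - conj a * a) / (1 - conj a * z) ^ 2) z := by
  have := ((hasDerivAt_id z).sub_const a).div
    (((hasDerivAt_id z).const_mul (conj a)).const_sub 1) h
  exact this.congr_deriv (by simp only [id]; ring)

lemma mul_deriv_blaschkeFactor (ha : ‖a‖ < 1) (hz : z ∈ unitCircle) :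
    z * deriv (blaschkeFactor a) z = poissonK a z * blaschkeFactor a z := by
  have hza := sub_ne_zero_of_norm_lt_one ha hz
  have hden := one_sub_conj_mul_eq (a := a) hz
  rw [(hasDerivAt_blaschkeFactor (one_sub_conj_mul_ne_zero ha hz)).deriv, poissonK, blaschkeFactor,
    hden]
  have hz0 : z ≠ 0 := by rintro rfl; simp at hz
  have hcza : conj (z - a) ≠ 0 := (map_ne_zero _).mpr hza
  push_cast
  rw [← conj_mul' a, ← mul_conj' (z - a)]
  field_simp

lemma poissonK_pos (ha : ‖a‖ < 1) (hz : z ∈ unitCircle) : 0 < poissonK a z := by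
  have : ‖a‖ ^ 2 < 1 := by nlinarith [norm_nonneg a]
  exact div_pos (by linarith) (by positivity [sub_ne_zero_of_norm_lt_one ha hz])

lemma isOrientedCircleMap_blaschkeFactor (ha : ‖a‖ < 1) :
    IsOrientedCircleMap (blaschkeFactor a) := by
  refine ⟨fun z hz => norm_blaschkeFactor ha hz, fun z hz =>
    (hasDerivAt_blaschkeFactor (one_sub_conj_mul_ne_zero ha hz)).differentiableAt, ?_,
    fun z hz => ?_⟩
  · refine ContinuousOn.congr (f := fun z => (1 - conj a * a) / (1 - conj a * z) ^ 2)
      (continuousOn_const.div (by fun_prop) fun z hz =>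
        pow_ne_zero 2 (one_sub_conj_mul_ne_zero ha hz)) fun z hz => ?_
    exact (hasDerivAt_blaschkeFactor (one_sub_conj_mul_ne_zero ha hz)).deriv
  · rw [norm_eq_of_mul_eq_ofReal_mul hz (norm_blaschkeFactor ha hz) (poissonK_pos ha hz).le
      (mul_deriv_blaschkeFactor ha hz)]
    exact mul_deriv_blaschkeFactor ha hz

end blaschkeFactor

lemma IsBlaschke.isOrientedCircleMap {n : ℕ} {T : ℂ → ℂ} (hB : IsBlaschke n T) :
    IsOrientedCircleMap T := by
  obtain ⟨-, θ₀, a, hθ₀, ha, hT⟩ := hB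
  rw [funext hT]
  exact (IsOrientedCircleMap.const hθ₀).mul
    (IsOrientedCircleMap.finset_prod _ fun i _ => isOrientedCircleMap_blaschkeFactor (ha i))

lemma eq_circleParam_comp_of_hasDerivAt {g : ℝ → ℂ} {φ φ' : ℝ → ℝ} {a : ℝ}
    (hφ : ∀ t, HasDerivAt φ (φ' t) t)
    (hg : ∀ t, HasDerivAt g (2 * Real.pi * I * φ' t * g t) t)
    (ha : g a = circleParam (φ a)) (t : ℝ) : g t = circleParam (φ t) := by
  have hq : ∀ s, HasDerivAt (fun s => g s * circleParam (-φ s)) 0 s := fun s => by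
    refine ((hg s).mul ((hasDerivAt_circleParam (-φ s)).scomp s (hφ s).neg)).congr_deriv ?_
    simp only [Function.comp_apply, Pi.neg_apply, real_smul, ofReal_neg]
    ring
  have hconst : g t * circleParam (-φ t) = g a * circleParam (-φ a) :=
    is_const_of_deriv_eq_zero (fun s => (hq s).differentiableAt) (fun s => (hq s).deriv) t a
  have hinv : ∀ x, circleParam x * circleParam (-x) = 1 := fun x => by
    rw [← circleParam_add, add_neg_cancel, circleParam]; simp
  calc g t = g t * circleParam (-φ t) * circleParam (φ t) := by
        rw [mul_assoc, mul_comm (circleParam _), hinv, mul_one]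
    _ = circleParam (φ t) := by rw [hconst, ha, hinv, one_mul]

lemma IsOrientedCircleMap.exists_lift {F : ℂ → ℂ} (hF : IsOrientedCircleMap F) :
    ∃ f : ℝ → ℝ, (∀ t, HasDerivAt f ‖deriv F (circleParam t)‖ t) ∧
      ∀ t, F (circleParam t) = circleParam (f t) := by
  have hcont : Continuous fun t => ‖deriv F (circleParam t)‖ :=
    (hF.continuousOn_deriv.comp_continuous continuous_circleParam
      circleParam_mem_unitCircle).norm
  obtain ⟨r, hr⟩ := exists_circleParam_eq (hF.mapsTo (circleParam_mem_unitCircle 0))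
  have hf : ∀ t, HasDerivAt (fun t => r + ∫ s in (0)..t, ‖deriv F (circleParam s)‖)
      ‖deriv F (circleParam t)‖ t := fun t =>
    ((hcont.integral_hasStrictDerivAt 0 t).hasDerivAt).const_add r
  refine ⟨_, hf, eq_circleParam_comp_of_hasDerivAt (a := 0) hf (fun t => ?_)
    (by simpa using hr.symm)⟩
  have hz := circleParam_mem_unitCircle t
  refine ((hF.differentiableAt _ hz).hasDerivAt.comp t (hasDerivAt_circleParam t)).congr_deriv ?_
  linear_combination 2 * Real.pi * I * hF.mul_deriv _ hz

lemma IsOrientedCircleMap.sub_mul_derivInf_le_toReal_mCircle_image {F : ℂ → ℂ}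
    (hF : IsOrientedCircleMap F) {a b : ℝ} (hab : a ≤ b) (hsmall : mCircle (F '' (circleParam '' Ico a b)) < 1) :
    (b - a) * derivInf F ≤ (mCircle (F '' (circleParam '' Ico a b))).toReal := by
  obtain ⟨f, hf, hlift⟩ := hF.exists_lift
  have hgrowth : derivInf F * (b - a) ≤ f b - f a :=
    mul_sub_le_image_sub_of_le_deriv (fun t => (hf t).differentiableAt)
      (fun t => (hf t).deriv ▸ derivInf_le_norm_deriv F (circleParam_mem_unitCircle t)) hab
  have hsub : circleParam '' Ico (f a) (f b) ⊆ F '' (circleParam '' Ico a b) := by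
    rw [image_image, funext hlift, ← image_image circleParam f]
    exact image_mono (intermediate_value_Ico hab
      (continuous_iff_continuousAt.mpr fun t => (hf t).continuousAt).continuousOn)
  have hle := ENNReal.toReal_mono hsmall.ne_top (measure_mono (μ := mCircle) hsub)
  have hfab : f a ≤ f b := by nlinarith [derivInf_nonneg F]
  rw [toReal_mCircle_image_Ico hfab] at hle
  have hlt : f b - f a < 1 := by
    have := hle.trans_lt ((ENNReal.toReal_lt_toReal hsmall.ne_top ENNReal.one_ne_top).mpr hsmall)
    simpa using this
  rw [min_eq_left hlt.le] at hle
  linarith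

theorem arc_expansion_general (n : ℕ)
    (T : Fin n → ℂ → ℂ) (deg : Fin n → ℕ) (hB : ∀ k, IsBlaschke (deg k) (T k))
    (A : Set ℂ) (a b : ℝ) (hab : a < b)
    (hA : A = (fun t : ℝ => Complex.exp (2 * (Real.pi : ℂ) * Complex.I * (t : ℂ))) '' Set.Ico a b)
    (hsmall : mCircle (compFam n T '' A) < 1) :
    (mCircle A).toReal * ∏ k, derivInf (T k) ≤ (mCircle (compFam n T '' A)).toReal := by
  have hT : ∀ k, IsOrientedCircleMap (T k) := fun k => (hB k).isOrientedCircleMap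
  have hA' : A = circleParam '' Ico a b := hA
  subst hA'
  have hlen : (mCircle (circleParam '' Ico a b)).toReal ≤ b - a :=
    (toReal_mCircle_image_Ico hab.le).trans_le (min_le_left _ _)
  calc (mCircle (circleParam '' Ico a b)).toReal * ∏ k, derivInf (T k)
      ≤ (b - a) * derivInf (compFam n T) :=
        mul_le_mul hlen (prod_derivInf_le_derivInf_compFam hT)
          (Finset.prod_nonneg fun k _ => derivInf_nonneg _) (by linarith)
    _ ≤ _ := (isOrientedCircleMap_compFam hT).sub_mul_derivInf_le_toReal_mCircle_image hab.le hsmall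

/-- expansion estimate for the image of an arc under a composition of
Blaschke products, as long as the image is not the whole circle. -/
theorem arc_expansion (n : ℕ) (hn : 1 ≤ n)
    (T : Fin n → ℂ → ℂ) (deg : Fin n → ℕ) (hB : ∀ k, IsBlaschke (deg k) (T k))
    (A : Set ℂ) (a b : ℝ) (h0a : 0 ≤ a) (hab : a < b) (hb1 : b ≤ 1)
    (hA : A = (fun t : ℝ => Complex.exp (2 * (Real.pi : ℂ) * Complex.I * (t : ℂ))) '' Set.Ico a b)
    (hsmall : mCircle (compFam n T '' A) < 1) :
    (mCircle A).toReal * ∏ k, derivInf (T k) ≤ (mCircle (compFam n T '' A)).toReal :=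
  arc_expansion_general n T deg hB A a b hab hA hsmall
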